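/- Let C = (G, C' : C'') be the graph code over F determined by a bipartite Δ-regular connected graph G = (V' : V'', E) with parts of size n > 1 and second-eigenvalue ratio γ = γ_G, where C' and C'' have minimum Hamming distances θΔ and δΔ. Let c be a nonzero codeword of C with support Y ⊆ E, let S ⊆ V' and T ⊆ V'' be the sets of endpoints of edges of Y in V' and V'', and set σ = |S|/n, τ = |T|/n. Then max{θσ, δτ} ≤ (1−γ)στ + γ√(στ). -/

import Mathlib

open Matrix BigOperators

open Finset Function

/-!
Every edge of the support `Y` joins `S` to `T`, so `|Y| ≤ e(S, T)`. Each `u ∈ S` carries a nonzero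
local codeword of `C'`, of weight at least `θΔ`, and counting the edges of `Y` by their left ends
gives `θΔ|S| ≤ |Y|`; likewise `δΔ|T| ≤ |Y|`. On the other side, the expander mixing lemma (the
Rayleigh bound `γΔ` on `𝟙ᗮ`, tested on the centered indicator vectors of `S` and `T`) gives
`e(S, T) ≤ Δn (στ + γ √(σ(1-σ)τ(1-τ)))`, and `√(σ(1-σ)τ(1-τ)) ≤ √(στ) - στ` by AM–GM.
-/

lemma dotProduct_self_nonneg {n R : Type*} [Fintype n] [Ring R] [LinearOrder R]
    [IsStrictOrderedRing R] (v : n → R) : 0 ≤ v ⬝ᵥ v :=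
  Finset.sum_nonneg fun i _ => mul_self_nonneg (v i)

lemma sqrt_mul_one_sub_mul_sqrt_mul_one_sub_le {σ τ : ℝ} (hσ0 : 0 ≤ σ) (hσ1 : σ ≤ 1)
    (hτ0 : 0 ≤ τ) (hτ1 : τ ≤ 1) :
    √(σ * (1 - σ)) * √(τ * (1 - τ)) ≤ √(σ * τ) - σ * τ := by
  obtain ⟨a, ha, rfl⟩ : ∃ a, 0 ≤ a ∧ σ = a ^ 2 := ⟨√σ, Real.sqrt_nonneg _, (Real.sq_sqrt hσ0).symm⟩
  obtain ⟨b, hb, rfl⟩ : ∃ b, 0 ≤ b ∧ τ = b ^ 2 := ⟨√τ, Real.sqrt_nonneg _, (Real.sq_sqrt hτ0).symm⟩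
  have ha1 : a ≤ 1 := by nlinarith
  have hb1 : b ≤ 1 := by nlinarith
  rw [← Real.sqrt_mul (by nlinarith), show a ^ 2 * b ^ 2 = (a * b) ^ 2 by ring,
    Real.sqrt_sq (by positivity), Real.sqrt_le_left
    (by nlinarith [mul_nonneg (mul_nonneg ha hb) (sub_nonneg.2 (mul_le_one₀ ha1 hb hb1))])]
  -- `(1 - a²)(1 - b²) ≤ (1 - ab)²` is AM–GM in the form `2ab ≤ a² + b²`
  nlinarith [sq_nonneg (a - b), mul_nonneg ha hb]

section Rayleigh

variable {ι κ : Type*} [Fintype ι] [Fintype κ]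

lemma dotProduct_mulVec_le_of_isGreatest {A : Matrix ι ι ℝ} {μ : ℝ}
    (hμ : IsGreatest {ρ : ℝ | ∃ x : ι → ℝ, x ≠ 0 ∧ x ⬝ᵥ (fun _ => 1) = 0 ∧
      x ⬝ᵥ (A *ᵥ x) = ρ * (x ⬝ᵥ x)} μ)
    {x : ι → ℝ} (hx : x ⬝ᵥ (fun _ => 1) = 0) : x ⬝ᵥ (A *ᵥ x) ≤ μ * (x ⬝ᵥ x) := by
  rcases eq_or_ne x 0 with rfl | hx0
  · simp
  have hxx : 0 < x ⬝ᵥ x :=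
    (dotProduct_self_nonneg x).lt_of_ne' (dotProduct_self_eq_zero.not.2 hx0)
  rw [← div_le_iff₀ hxx]
  exact hμ.2 ⟨x, hx0, hx, (div_mul_cancel₀ _ hxx.ne').symm⟩

lemma nonneg_of_isGreatest_fromBlocks [Nontrivial ι] {X : Matrix ι κ ℝ} {μ : ℝ}
    (hμ : IsGreatest {ρ : ℝ | ∃ x : ι ⊕ κ → ℝ, x ≠ 0 ∧ x ⬝ᵥ (fun _ => 1) = 0 ∧
      x ⬝ᵥ (fromBlocks 0 X Xᵀ 0 *ᵥ x) = ρ * (x ⬝ᵥ x)} μ) : 0 ≤ μ := by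
  classical
  obtain ⟨i, j, hij⟩ := exists_pair_ne ι
  -- a vector supported on one side of the bipartition has Rayleigh quotient `0`
  refine hμ.2 ⟨Sum.elim (Pi.single i 1 - Pi.single j 1) 0, ?_, ?_, ?_⟩
  · intro h
    simpa [hij] using congrFun h (Sum.inl i)
  · simp [dotProduct, Fintype.sum_sum_type, Finset.sum_sub_distrib]
  · simp [fromBlocks_mulVec, sumElim_dotProduct_sumElim]

lemma dotProduct_mulVec_le_of_fromBlocks {X : Matrix ι κ ℝ} {μ : ℝ}
    (h : ∀ x : ι ⊕ κ → ℝ, x ⬝ᵥ (fun _ => 1) = 0 →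
      x ⬝ᵥ (fromBlocks 0 X Xᵀ 0 *ᵥ x) ≤ μ * (x ⬝ᵥ x))
    {f : ι → ℝ} {g : κ → ℝ} (hf : ∑ i, f i = 0) (hg : ∑ j, g j = 0) :
    f ⬝ᵥ (X *ᵥ g) ≤ μ * (√(f ⬝ᵥ f) * √(g ⬝ᵥ g)) := by
  set s := √(g ⬝ᵥ g)
  set t := √(f ⬝ᵥ f)
  have hs2 : s ^ 2 = g ⬝ᵥ g := Real.sq_sqrt (dotProduct_self_nonneg g)
  have ht2 : t ^ 2 = f ⬝ᵥ f := Real.sq_sqrt (dotProduct_self_nonneg f)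
  -- the test vector `(‖g‖ f, ‖f‖ g)` balances the two halves of `x ⬝ᵥ x`
  have key := h (Sum.elim (s • f) (t • g)) (by
    simp [dotProduct, Fintype.sum_sum_type, ← Finset.mul_sum, hf, hg])
  have hswap : (t • g) ⬝ᵥ (Xᵀ *ᵥ (s • f)) = (s • f) ⬝ᵥ (X *ᵥ (t • g)) := by
    rw [dotProduct_mulVec, vecMul_transpose, dotProduct_comm]
  simp only [fromBlocks_mulVec, sumElim_dotProduct_sumElim, Sum.elim_comp_inl, Sum.elim_comp_inr,
    zero_mulVec, zero_add, add_zero, hswap] at key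
  simp only [mulVec_smul, dotProduct_smul, smul_dotProduct, smul_eq_mul, ← hs2, ← ht2] at key
  rcases (mul_nonneg (Real.sqrt_nonneg _) (Real.sqrt_nonneg _) : 0 ≤ s * t).eq_or_lt with h0 | hpos
  · rcases mul_eq_zero.1 h0.symm with h0 | h0
    · simp [dotProduct_self_eq_zero.1 (by rw [← hs2, h0]; ring : g ⬝ᵥ g = 0), h0]
    · simp [dotProduct_self_eq_zero.1 (by rw [← ht2, h0]; ring : f ⬝ᵥ f = 0), h0]
  · refine le_of_mul_le_mul_left ?_ hpos
    nlinarith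

end Rayleigh

section Mixing

variable {ι : Type*} [Fintype ι]

lemma card_eq_div_mul_card (S : Finset ι) :
    (#S : ℝ) = #S / Fintype.card ι * Fintype.card ι :=
  (div_mul_cancel_of_imp fun h => by
    have := S.card_le_univ
    simp_all).symm

variable [DecidableEq ι]

def centeredIndicator (S : Finset ι) (σ : ℝ) : ι → ℝ := fun i => (if i ∈ S then 1 else 0) - σ

lemma sum_centeredIndicator {S : Finset ι} {σ : ℝ} (hσ : (#S : ℝ) = σ * Fintype.card ι) :
    ∑ i, centeredIndicator S σ i = 0 := by
  simp [centeredIndicator, Finset.sum_sub_distrib, hσ, mul_comm]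

lemma centeredIndicator_dotProduct_self {S : Finset ι} {σ : ℝ}
    (hσ : (#S : ℝ) = σ * Fintype.card ι) :
    centeredIndicator S σ ⬝ᵥ centeredIndicator S σ = Fintype.card ι * (σ * (1 - σ)) := by
  have hpt : ∀ i, centeredIndicator S σ i * centeredIndicator S σ i =
      (1 - 2 * σ) * (if i ∈ S then 1 else 0) + σ ^ 2 := by
    intro i; unfold centeredIndicator; split_ifs <;> ring
  simp only [dotProduct, hpt, Finset.sum_add_distrib, ← Finset.mul_sum]
  simp [hσ]
  ring

lemma sum_sum_eq_centeredIndicator_dotProduct_mulVec_add {X : Matrix ι ι ℝ} {d : ℝ}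
    (hrow : ∀ i, ∑ j, X i j = d) (hcol : ∀ j, ∑ i, X i j = d) {S T : Finset ι} {σ τ : ℝ}
    (hσ : (#S : ℝ) = σ * Fintype.card ι) (hτ : (#T : ℝ) = τ * Fintype.card ι) :
    ∑ i ∈ S, ∑ j ∈ T, X i j =
      centeredIndicator S σ ⬝ᵥ (X *ᵥ centeredIndicator T τ) + d * Fintype.card ι * (σ * τ) := by
  have hpt : ∀ i j, centeredIndicator S σ i * (X i j * centeredIndicator T τ j) =
      (if i ∈ S then 1 else 0) * X i j * (if j ∈ T then 1 else 0)
        - τ * ((if i ∈ S then 1 else 0) * X i j) - σ * (X i j * (if j ∈ T then 1 else 0))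
        + σ * τ * X i j := by
    intro i j; unfold centeredIndicator; ring
  have hST : ∑ i, ∑ j, (if i ∈ S then (1 : ℝ) else 0) * X i j * (if j ∈ T then 1 else 0) =
      ∑ i ∈ S, ∑ j ∈ T, X i j := by
    simp [ite_mul, mul_ite, Finset.sum_ite_mem]
  have hS : ∑ i, (if i ∈ S then (1 : ℝ) else 0) * ∑ j, X i j = d * #S := by
    simp [hrow, Finset.sum_ite_mem, mul_comm]
  have hT : ∑ i, ∑ j, X i j * (if j ∈ T then (1 : ℝ) else 0) = d * #T := by
    rw [Finset.sum_comm]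
    simp [hcol, Finset.sum_ite_mem, mul_comm]
  have hall : ∑ i, ∑ j, X i j = d * Fintype.card ι := by
    simp [hrow, mul_comm]
  have hexpand : centeredIndicator S σ ⬝ᵥ (X *ᵥ centeredIndicator T τ) =
      ∑ i, ∑ j, centeredIndicator S σ i * (X i j * centeredIndicator T τ j) := by
    simp only [dotProduct, mulVec, Finset.mul_sum]
  simp only [hexpand, hpt, Finset.sum_add_distrib, Finset.sum_sub_distrib, ← Finset.mul_sum]
  rw [hST, hS, hT, hall, hσ, hτ]
  ring

lemma sum_sum_le_mixing_bound {X : Matrix ι ι ℝ} {d γ : ℝ}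
    (hrow : ∀ i, ∑ j, X i j = d) (hcol : ∀ j, ∑ i, X i j = d)
    (h : ∀ x : ι ⊕ ι → ℝ, x ⬝ᵥ (fun _ => 1) = 0 →
      x ⬝ᵥ (fromBlocks 0 X Xᵀ 0 *ᵥ x) ≤ γ * d * (x ⬝ᵥ x))
    (hγ : 0 ≤ γ * d) (S T : Finset ι) {σ τ : ℝ}
    (hσ : σ = #S / Fintype.card ι) (hτ : τ = #T / Fintype.card ι) :
    ∑ i ∈ S, ∑ j ∈ T, X i j ≤ d * Fintype.card ι * ((1 - γ) * σ * τ + γ * √(σ * τ)) := by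
  have hN : (0 : ℝ) ≤ Fintype.card ι := Nat.cast_nonneg _
  have hSσ : (#S : ℝ) = σ * Fintype.card ι := hσ ▸ card_eq_div_mul_card S
  have hTτ : (#T : ℝ) = τ * Fintype.card ι := hτ ▸ card_eq_div_mul_card T
  have hσ0 : 0 ≤ σ := hσ ▸ div_nonneg (Nat.cast_nonneg _) hN
  have hτ0 : 0 ≤ τ := hτ ▸ div_nonneg (Nat.cast_nonneg _) hN
  have hσ1 : σ ≤ 1 := hσ ▸ div_le_one_of_le₀ (by exact_mod_cast S.card_le_univ) hN
  have hτ1 : τ ≤ 1 := hτ ▸ div_le_one_of_le₀ (by exact_mod_cast T.card_le_univ) hN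
  have hrayleigh : centeredIndicator S σ ⬝ᵥ (X *ᵥ centeredIndicator T τ) ≤
      γ * d * (√(Fintype.card ι * (σ * (1 - σ))) * √(Fintype.card ι * (τ * (1 - τ)))) := by
    rw [← centeredIndicator_dotProduct_self hSσ, ← centeredIndicator_dotProduct_self hTτ]
    exact dotProduct_mulVec_le_of_fromBlocks h (sum_centeredIndicator hSσ)
      (sum_centeredIndicator hTτ)
  have hnorms : √(Fintype.card ι * (σ * (1 - σ))) * √(Fintype.card ι * (τ * (1 - τ))) ≤
      Fintype.card ι * (√(σ * τ) - σ * τ) := by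
    rw [Real.sqrt_mul hN, Real.sqrt_mul hN, mul_mul_mul_comm, Real.mul_self_sqrt hN]
    exact mul_le_mul_of_nonneg_left (sqrt_mul_one_sub_mul_sqrt_mul_one_sub_le hσ0 hσ1 hτ0 hτ1) hN
  calc ∑ i ∈ S, ∑ j ∈ T, X i j
      = centeredIndicator S σ ⬝ᵥ (X *ᵥ centeredIndicator T τ) + d * Fintype.card ι * (σ * τ) :=
        sum_sum_eq_centeredIndicator_dotProduct_mulVec_add hrow hcol hSσ hTτ
    _ ≤ γ * d * (Fintype.card ι * (√(σ * τ) - σ * τ)) + d * Fintype.card ι * (σ * τ) := by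
        grw [hrayleigh, hnorms]
    _ = d * Fintype.card ι * ((1 - γ) * σ * τ + γ * √(σ * τ)) := by ring

end Mixing

section EdgeLabelling

variable {V W E : Type*} {Δ : ℕ}

lemma bijective_uncurry_of_edge_labelling {l : E → V} {eL : V → Fin Δ → E}
    (hinj : ∀ u, Injective (eL u)) (hend : ∀ u i, l (eL u i) = u)
    (hsurj : ∀ e, ∃ i, eL (l e) i = e) : Bijective (uncurry eL) := by
  refine ⟨fun ⟨u, i⟩ ⟨u', i'⟩ h => ?_, fun e => ?_⟩
  · obtain rfl : u = u' := by rw [← hend u i, ← hend u' i']; exact congrArg l h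
    exact Prod.ext rfl (hinj u h)
  · obtain ⟨i, hi⟩ := hsurj e
    exact ⟨(l e, i), hi⟩

variable [Fintype E]

lemma card_filter_ne_zero_eq_sum_hammingNorm [Fintype V] {F : Type*} [Zero F] [DecidableEq F]
    {eL : V → Fin Δ → E} (hbij : Bijective (uncurry eL)) (c : E → F) :
    #{e | c e ≠ 0} = ∑ u, hammingNorm fun i => c (eL u i) := by
  simp only [hammingNorm, Finset.card_filter, ← Fintype.sum_prod_type']
  exact (hbij.sum_comp fun e => if c e ≠ 0 then 1 else 0).symm

lemma mul_card_image_le_card_filter_ne_zero [Fintype V] [DecidableEq V] {F : Type*} [Zero F]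
    [DecidableEq F] {l : E → V} {eL : V → Fin Δ → E}
    (hinj : ∀ u, Injective (eL u)) (hend : ∀ u i, l (eL u i) = u)
    (hsurj : ∀ e, ∃ i, eL (l e) i = e) (c : E → F) {w : ℝ}
    (hw : ∀ u, (fun i => c (eL u i)) ≠ 0 → w ≤ hammingNorm fun i => c (eL u i)) :
    w * #(({e | c e ≠ 0} : Finset E).image l) ≤ #({e | c e ≠ 0} : Finset E) := by
  have hlocal : ∀ u ∈ ({e | c e ≠ 0} : Finset E).image l, (fun i => c (eL u i)) ≠ 0 := by
    simp only [Finset.mem_image, Finset.mem_filter, Finset.mem_univ, true_and]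
    rintro _ ⟨e, hce, rfl⟩ h0
    obtain ⟨i, hi⟩ := hsurj e
    exact hce (hi ▸ congrFun h0 i)
  rw [card_filter_ne_zero_eq_sum_hammingNorm (bijective_uncurry_of_edge_labelling hinj hend hsurj),
    Nat.cast_sum, mul_comm, ← nsmul_eq_mul, ← Finset.sum_const]
  exact (Finset.sum_le_sum fun u hu => hw u (hlocal u hu)).trans
    (Finset.sum_le_sum_of_subset_of_nonneg (Finset.subset_univ _) fun _ _ _ => Nat.cast_nonneg _)

variable [DecidableEq V] [DecidableEq W]

lemma sum_biadjacency_row [Fintype W] {l : E → V} {r : E → W} {eL : V → Fin Δ → E}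
    (hinj : ∀ u, Injective (eL u)) (hend : ∀ u i, l (eL u i) = u)
    (hsurj : ∀ e, ∃ i, eL (l e) i = e) (hsimple : ∀ e e', l e = l e' → r e = r e' → e = e')
    {X : Matrix V W ℝ} (hX : ∀ u v, X u v = if ∃ e, l e = u ∧ r e = v then 1 else 0) (u : V) :
    ∑ v, X u v = Δ := by
  have hnbrs : ({v | ∃ e, l e = u ∧ r e = v} : Finset W) = univ.image fun i => r (eL u i) := by
    ext v
    simp only [Finset.mem_filter, Finset.mem_image, Finset.mem_univ, true_and]
    constructor
    · rintro ⟨e, rfl, rfl⟩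
      obtain ⟨i, hi⟩ := hsurj e
      exact ⟨i, by rw [hi]⟩
    · rintro ⟨i, rfl⟩
      exact ⟨eL u i, hend u i, rfl⟩
  have hinj' : Injective fun i => r (eL u i) :=
    fun i j hij => hinj u (hsimple _ _ (by rw [hend, hend]) hij)
  simp only [hX, Finset.sum_boole, hnbrs, Finset.card_image_of_injective _ hinj', Finset.card_univ,
    Fintype.card_fin]

lemma card_le_sum_sum_biadjacency {l : E → V} {r : E → W}
    (hsimple : ∀ e e', l e = l e' → r e = r e' → e = e')
    {X : Matrix V W ℝ} (hX : ∀ u v, X u v = if ∃ e, l e = u ∧ r e = v then 1 else 0)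
    (Y : Finset E) : (#Y : ℝ) ≤ ∑ u ∈ Y.image l, ∑ v ∈ Y.image r, X u v := by
  have hsub : Y.image (fun e => (l e, r e)) ⊆ Y.image l ×ˢ Y.image r := by
    intro p hp
    obtain ⟨e, he, rfl⟩ := Finset.mem_image.1 hp
    exact Finset.mem_product.2 ⟨Finset.mem_image_of_mem _ he, Finset.mem_image_of_mem _ he⟩
  have hedge : ∀ e, ∃ e', l e' = l e ∧ r e' = r e := fun e => ⟨e, rfl, rfl⟩
  calc (#Y : ℝ) = ∑ e ∈ Y, X (l e) (r e) := by simp [hX, hedge]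
    _ = ∑ p ∈ Y.image (fun e => (l e, r e)), X p.1 p.2 :=
      (Finset.sum_image (f := fun p => X p.1 p.2) (g := fun e => (l e, r e)) fun e _ e' _ h =>
        hsimple e e' (congrArg Prod.fst h) (congrArg Prod.snd h)).symm
    _ ≤ ∑ p ∈ Y.image l ×ˢ Y.image r, X p.1 p.2 :=
      Finset.sum_le_sum_of_subset_of_nonneg hsub fun p _ _ => by rw [hX]; positivity
    _ = ∑ u ∈ Y.image l, ∑ v ∈ Y.image r, X u v := Finset.sum_product _ _ _

end EdgeLabelling

theorem stmt_10_general (n Δ : ℕ) (hn : 1 < n) (hΔ : 0 < Δ)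
    (E : Type) [Fintype E]
    (l r : E → Fin n)
    (eL : Fin n → Fin Δ → E) (eR : Fin n → Fin Δ → E)
    (heLinj : ∀ u, Function.Injective (eL u))
    (heLend : ∀ u i, l (eL u i) = u)
    (heLsurj : ∀ e, ∃ i, eL (l e) i = e)
    (heRinj : ∀ v, Function.Injective (eR v))
    (heRend : ∀ v j, r (eR v j) = v)
    (heRsurj : ∀ e, ∃ j, eR (r e) j = e)
    (hsimple : ∀ e e', l e = l e' → r e = r e' → e = e')
    (X : Matrix (Fin n) (Fin n) ℝ)
    (hX : ∀ u v : Fin n, X u v = if ∃ e, l e = u ∧ r e = v then 1 else 0)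
    (γ : ℝ)
    (hγ : IsGreatest {ρ : ℝ | ∃ x : (Fin n ⊕ Fin n) → ℝ, x ≠ 0 ∧
        (x ⬝ᵥ (fun _ => 1)) = 0 ∧
        x ⬝ᵥ ((Matrix.fromBlocks 0 X Xᵀ 0).mulVec x) = ρ * (x ⬝ᵥ x)} (γ * Δ))
    (F : Type) [Field F] [DecidableEq F]
    (C' C'' : Submodule F (Fin Δ → F))
    (θ δ : ℝ)
    (hC'dist : ∀ x : Fin Δ → F, x ∈ C' → x ≠ 0 → θ * Δ ≤ (hammingNorm x : ℝ))
    (hC''dist : ∀ x : Fin Δ → F, x ∈ C'' → x ≠ 0 → δ * Δ ≤ (hammingNorm x : ℝ))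
    (c : E → F)
    (hcL : ∀ u, (fun i => c (eL u i)) ∈ C')
    (hcR : ∀ v, (fun j => c (eR v j)) ∈ C'')
    (Y : Finset E) (hY : Y = Finset.univ.filter (fun e => c e ≠ 0))
    (S : Finset (Fin n)) (hS : S = Y.image l)
    (T : Finset (Fin n)) (hT : T = Y.image r)
    (σ τ : ℝ) (hσ : σ = (S.card : ℝ) / n) (hτ : τ = (T.card : ℝ) / n) :
    max (θ * σ) (δ * τ) ≤ (1 - γ) * σ * τ + γ * Real.sqrt (σ * τ) := by
  have : Nontrivial (Fin n) := Fin.nontrivial_iff_two_le.2 hn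
  have hrow : ∀ u, ∑ v, X u v = Δ := sum_biadjacency_row heLinj heLend heLsurj hsimple hX
  have hcol : ∀ v, ∑ u, X u v = Δ := sum_biadjacency_row heRinj heRend heRsurj
    (fun e e' h₁ h₂ => hsimple e e' h₂ h₁) (X := Xᵀ) (by simp [hX, and_comm])
  have hmix := sum_sum_le_mixing_bound hrow hcol
    (fun x hx => dotProduct_mulVec_le_of_isGreatest hγ hx) (nonneg_of_isGreatest_fromBlocks hγ) S T
    (by simpa using hσ) (by simpa using hτ)
  rw [Fintype.card_fin] at hmix
  have hedges := card_le_sum_sum_biadjacency hsimple hX Y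
  have hθ := mul_card_image_le_card_filter_ne_zero heLinj heLend heLsurj c
    fun u hu => hC'dist _ (hcL u) hu
  have hδ := mul_card_image_le_card_filter_ne_zero heRinj heRend heRsurj c
    fun v hv => hC''dist _ (hcR v) hv
  subst hY hS hT
  have hΔn : (0 : ℝ) < Δ * n := by positivity
  have hdensity : ∀ w k : ℝ, w * Δ * k ≤ Δ * n * ((1 - γ) * σ * τ + γ * √(σ * τ)) →
      w * (k / n) ≤ (1 - γ) * σ * τ + γ * √(σ * τ) := fun w k h =>
    le_of_mul_le_mul_left (by rwa [show (Δ * n : ℝ) * (w * (k / n)) = w * Δ * k by field_simp]) hΔn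
  subst hσ hτ
  rw [max_le_iff]
  exact ⟨hdensity θ _ (hθ.trans (hedges.trans hmix)), hdensity δ _ (hδ.trans (hedges.trans hmix))⟩

/-- Mixing inequality satisfied by the support of a nonzero graph-code word.
The bipartite `Δ`-regular connected graph `G = (V' : V'', E)` with parts of size `n > 1` is
modelled by an edge type `E`, endpoint maps `l, r : E → Fin n`, and for each vertex an ordering
of its `Δ` incident edges.  `X` is the biadjacency matrix of `G` and `γ * Δ` is the second
largest eigenvalue of the adjacency matrix `fromBlocks 0 X Xᵀ 0` (Courant–Fischer
characterization over the orthogonal complement of the all-one vector).  `C'` and `C''` have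
minimum Hamming distances (at least) `θΔ` and `δΔ`.  For a nonzero codeword `c` of the graph
code with support `Y`, and `σ = |S|/n`, `τ = |T|/n` the normalized endpoint sets,
`max{θσ, δτ} ≤ (1−γ)στ + γ√(στ)`. -/
theorem stmt_10 (n Δ : ℕ) (hn : 1 < n) (hΔ : 0 < Δ)
    (E : Type) [Fintype E] [DecidableEq E]
    (l r : E → Fin n)
    (eL : Fin n → Fin Δ → E) (eR : Fin n → Fin Δ → E)
    (heLinj : ∀ u, Function.Injective (eL u))
    (heLend : ∀ u i, l (eL u i) = u)
    (heLsurj : ∀ e, ∃ i, eL (l e) i = e)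
    (heRinj : ∀ v, Function.Injective (eR v))
    (heRend : ∀ v j, r (eR v j) = v)
    (heRsurj : ∀ e, ∃ j, eR (r e) j = e)
    (hsimple : ∀ e e', l e = l e' → r e = r e' → e = e')
    (hconn : (SimpleGraph.fromRel (fun a b : Fin n ⊕ Fin n =>
        ∃ e : E, a = Sum.inl (l e) ∧ b = Sum.inr (r e))).Connected)
    (X : Matrix (Fin n) (Fin n) ℝ)
    (hX : ∀ u v : Fin n, X u v = if ∃ e, l e = u ∧ r e = v then 1 else 0)
    (γ : ℝ)
    (hγ : IsGreatest {ρ : ℝ | ∃ x : (Fin n ⊕ Fin n) → ℝ, x ≠ 0 ∧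
        (x ⬝ᵥ (fun _ => 1)) = 0 ∧
        x ⬝ᵥ ((Matrix.fromBlocks 0 X Xᵀ 0).mulVec x) = ρ * (x ⬝ᵥ x)} (γ * Δ))
    (F : Type) [Field F] [Fintype F] [DecidableEq F]
    (C' C'' : Submodule F (Fin Δ → F))
    (θ δ : ℝ)
    (hC'dist : ∀ x : Fin Δ → F, x ∈ C' → x ≠ 0 → θ * Δ ≤ (hammingNorm x : ℝ))
    (hC''dist : ∀ x : Fin Δ → F, x ∈ C'' → x ≠ 0 → δ * Δ ≤ (hammingNorm x : ℝ))
    (c : E → F)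
    (hcL : ∀ u, (fun i => c (eL u i)) ∈ C')
    (hcR : ∀ v, (fun j => c (eR v j)) ∈ C'')
    (hc0 : c ≠ 0)
    (Y : Finset E) (hY : Y = Finset.univ.filter (fun e => c e ≠ 0))
    (S : Finset (Fin n)) (hS : S = Y.image l)
    (T : Finset (Fin n)) (hT : T = Y.image r)
    (σ τ : ℝ) (hσ : σ = (S.card : ℝ) / n) (hτ : τ = (T.card : ℝ) / n) :
    max (θ * σ) (δ * τ) ≤ (1 - γ) * σ * τ + γ * Real.sqrt (σ * τ) :=
  stmt_10_general n Δ hn hΔ E l r eL eR heLinj heLend heLsurj heRinj heRend heRsurj hsimple X hX γ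
    hγ F C' C'' θ δ hC'dist hC''dist c hcL hcR Y hY S hS T hT σ τ hσ hτ
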